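/- arXiv:2305.19739 — 4 statements merged into one kernel-verified Lean document; each statement's English description precedes it below -/
import Mathlib

section
/- Let λ > 0 and t > 0. For every measurable function f : ℝ → ℝ with ∫_ℝ f(y)² e^{-2λ|y|} dy < ∞, the heat semigroup satisfies ∫_ℝ (P_t f(x))² e^{-2λ|x|} dx ≤ 2 e^{2λ² t} ∫_ℝ f(y)² e^{-2λ|y|} dy; equivalently, ‖P_t f‖_{L²_λ} ≤ √2 e^{λ² t} ‖f‖_{L²_λ}. -/
open MeasureTheory Real ProbabilityTheory
open scoped ENNReal NNReal

-- mgf-type lemma: pointwise completion of the square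
lemma gauss_mgf_pointwise (t : ℝ) (ht : 0 < t) (c u : ℝ) :
    gaussianPDFReal 0 t.toNNReal u * Real.exp (c * u)
      = Real.exp (c ^ 2 * t / 2) * gaussianPDFReal (c * t) t.toNNReal u := by
  have h : ((t.toNNReal : ℝ)) = t := Real.coe_toNNReal t ht.le
  simp only [gaussianPDFReal, h, sub_zero]
  rw [mul_assoc, ← Real.exp_add, show (-u ^ 2 / (2 * t) + c * u)
      = (c ^ 2 * t / 2 + -(u - c * t) ^ 2 / (2 * t)) from by field_simp; ring,
    Real.exp_add]
  ring

lemma gauss_mgf_integrable (t : ℝ) (ht : 0 < t) (c : ℝ) :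
    Integrable (fun u => gaussianPDFReal 0 t.toNNReal u * Real.exp (c * u)) := by
  simp_rw [gauss_mgf_pointwise t ht c]
  exact (integrable_gaussianPDFReal _ _).const_mul _

lemma gauss_mgf (t : ℝ) (ht : 0 < t) (c : ℝ) :
    ∫ u, gaussianPDFReal 0 t.toNNReal u * Real.exp (c * u) = Real.exp (c ^ 2 * t / 2) := by
  have ht' : t.toNNReal ≠ 0 := ne_of_gt (Real.toNNReal_pos.mpr ht)
  simp_rw [gauss_mgf_pointwise t ht c]
  rw [integral_const_mul, integral_gaussianPDFReal_eq_one _ ht', mul_one]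

/-- The one-dimensional heat kernel `p_t(x,y) = (2πt)^{-1/2} exp(-(x-y)²/(2t))`. -/
noncomputable def heatKernel (t x y : ℝ) : ℝ :=
  (Real.sqrt (2 * Real.pi * t))⁻¹ * Real.exp (-(x - y) ^ 2 / (2 * t))

/-- The heat semigroup `P_t f(x) = ∫ p_t(x,y) f(y) dy`. -/
noncomputable def heatSemigroup (t : ℝ) (f : ℝ → ℝ) (x : ℝ) : ℝ :=
  ∫ y : ℝ, heatKernel t x y * f y

lemma heatKernel_eq (t : ℝ) (ht : 0 < t) (x y : ℝ) :
    heatKernel t x y = gaussianPDFReal 0 t.toNNReal (x - y) := by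
  simp [heatKernel, gaussianPDFReal, Real.coe_toNNReal t ht.le]

lemma heatKernel_eq' (t : ℝ) (ht : 0 < t) (x y : ℝ) :
    heatKernel t x y = gaussianPDFReal x t.toNNReal y := by
  simp only [heatKernel, gaussianPDFReal, Real.coe_toNNReal t ht.le]
  rw [show (-(x - y) ^ 2 : ℝ) = -(y - x) ^ 2 by ring]

lemma heatKernel_nonneg (t : ℝ) (ht : 0 < t) (x y : ℝ) : 0 ≤ heatKernel t x y := by
  rw [heatKernel_eq t ht]; exact gaussianPDFReal_nonneg _ _ _

lemma kernel_weight_bound (lam t : ℝ) (hlam : 0 < lam) (ht : 0 < t) (y : ℝ) :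
    ∫⁻ x, ENNReal.ofReal (heatKernel t x y * Real.exp (-2 * lam * |x|))
      ≤ ENNReal.ofReal (2 * Real.exp (2 * lam ^ 2 * t) * Real.exp (-2 * lam * |y|)) := by
  set c := 2 * lam with hc
  set h : ℝ → ℝ := fun x => Real.exp (-2 * lam * |y|) *
      (gaussianPDFReal 0 t.toNNReal (x - y) * Real.exp (c * (x - y))
       + gaussianPDFReal 0 t.toNNReal (x - y) * Real.exp (-c * (x - y))) with hh
  have hnonneg : ∀ x, 0 ≤ h x := by
    intro x
    have := gaussianPDFReal_nonneg 0 t.toNNReal (x - y)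
    positivity
  have hint : Integrable h := by
    apply Integrable.const_mul
    have := ((gauss_mgf_integrable t ht c).add (gauss_mgf_integrable t ht (-c))).comp_sub_right y
    simpa using this
  have hpt : ∀ x, heatKernel t x y * Real.exp (-2 * lam * |x|) ≤ h x := by
    intro x
    have h2 : |y| - |x| ≤ |x - y| := by
      rw [abs_sub_comm]; exact abs_sub_abs_le_abs_sub y x
    have h1 : Real.exp (-2 * lam * |x|) ≤
        Real.exp (-2 * lam * |y|) * (Real.exp (c * (x - y)) + Real.exp (-c * (x - y))) := by
      have e1 : Real.exp (-2 * lam * |x|) ≤ Real.exp (-2 * lam * |y| + c * |x - y|) := by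
        apply Real.exp_le_exp.mpr
        rw [hc]; nlinarith [hlam.le]
      refine e1.trans ?_
      rw [Real.exp_add]
      apply mul_le_mul_of_nonneg_left _ (Real.exp_nonneg _)
      rcases abs_cases (x - y) with ⟨he, _⟩ | ⟨he, _⟩
      · rw [he]
        exact le_add_of_nonneg_right (Real.exp_pos _).le
      · rw [he, show c * -(x - y) = -c * (x - y) by ring]
        exact le_add_of_nonneg_left (Real.exp_pos _).le
    calc heatKernel t x y * Real.exp (-2 * lam * |x|)
        ≤ heatKernel t x y *
          (Real.exp (-2 * lam * |y|) * (Real.exp (c * (x - y)) + Real.exp (-c * (x - y)))) :=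
          mul_le_mul_of_nonneg_left h1 (heatKernel_nonneg t ht x y)
      _ = h x := by rw [heatKernel_eq t ht x y, hh]; ring
  calc ∫⁻ x, ENNReal.ofReal (heatKernel t x y * Real.exp (-2 * lam * |x|))
      ≤ ∫⁻ x, ENNReal.ofReal (h x) :=
        lintegral_mono fun x => ENNReal.ofReal_le_ofReal (hpt x)
    _ = ENNReal.ofReal (∫ x, h x) :=
        (ofReal_integral_eq_lintegral_ofReal hint (ae_of_all _ hnonneg)).symm
    _ ≤ _ := by
        apply ENNReal.ofReal_le_ofReal
        rw [hh]
        rw [integral_const_mul]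
        rw [integral_sub_right_eq_self (fun u => gaussianPDFReal 0 t.toNNReal u *
          Real.exp (c * u) + gaussianPDFReal 0 t.toNNReal u * Real.exp (-c * u)) y]
        rw [integral_add (gauss_mgf_integrable t ht c) (gauss_mgf_integrable t ht (-c)),
          gauss_mgf t ht c, gauss_mgf t ht (-c)]
        rw [hc]
        rw [show ((-(2 * lam)) ^ 2 * t / 2 : ℝ) = (2 * lam) ^ 2 * t / 2 by ring,
          show ((2 * lam) ^ 2 * t / 2 : ℝ) = 2 * lam ^ 2 * t by ring]
        apply le_of_eq
        ring

lemma heatKernel_pos (t : ℝ) (ht : 0 < t) (x y : ℝ) : 0 < heatKernel t x y := by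
  rw [heatKernel_eq' t ht]
  exact gaussianPDFReal_pos _ _ _ (ne_of_gt (Real.toNNReal_pos.mpr ht))

lemma heatKernel_measurable_y (t x : ℝ) (ht : 0 < t) :
    Measurable (fun y => heatKernel t x y) := by
  have := measurable_gaussianPDFReal x t.toNNReal
  simpa [funext fun y => heatKernel_eq' t ht x y] using this

lemma cs_pointwise (t : ℝ) (ht : 0 < t) (f : ℝ → ℝ) (hf : Measurable f) (x : ℝ) :
    ENNReal.ofReal (heatSemigroup t f x ^ 2)
      ≤ ∫⁻ y, ENNReal.ofReal (heatKernel t x y * f y ^ 2) := by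
  set P : ℝ → ℝ≥0∞ := fun y => ENNReal.ofReal (heatKernel t x y) with hP
  set F : ℝ → ℝ≥0∞ := fun y => ENNReal.ofReal |f y| with hF
  have hPm : Measurable P := (heatKernel_measurable_y t x ht).ennreal_ofReal
  have hFm : Measurable F := hf.abs.ennreal_ofReal
  have hPne : ∀ y, P y ≠ 0 := fun y =>
    ne_of_gt (ENNReal.ofReal_pos.mpr (heatKernel_pos t ht x y))
  -- Step 1 : |P_t f x| ≤ ∫⁻ P * F
  have step1 : ENNReal.ofReal |heatSemigroup t f x| ≤ ∫⁻ y, P y * F y := by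
    have hn := norm_integral_le_lintegral_norm (μ := (volume : Measure ℝ))
      (f := fun y => heatKernel t x y * f y)
    rw [Real.norm_eq_abs] at hn
    have : ∫⁻ y, ENNReal.ofReal ‖heatKernel t x y * f y‖ = ∫⁻ y, P y * F y := by
      congr 1; funext y
      rw [Real.norm_eq_abs, abs_mul, abs_of_nonneg (heatKernel_nonneg t ht x y),
        ENNReal.ofReal_mul (heatKernel_nonneg t ht x y)]
    rw [this] at hn
    exact (ENNReal.ofReal_le_ofReal hn).trans ENNReal.ofReal_toReal_le
  -- Step 2 : Cauchy-Schwarz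
  have hpq : Real.HolderConjugate 2 2 := Real.HolderConjugate.two_two
  have hold := ENNReal.lintegral_mul_le_Lp_mul_Lq (volume : Measure ℝ) hpq
    (f := fun y => P y ^ ((1:ℝ)/2)) (g := fun y => P y ^ ((1:ℝ)/2) * F y)
    (hPm.pow_const _).aemeasurable ((hPm.pow_const _).mul hFm).aemeasurable
  have hmul : ∀ y, (fun y => P y ^ ((1:ℝ)/2)) y * ((fun y => P y ^ ((1:ℝ)/2) * F y) y)
      = P y * F y := by
    intro y
    rw [← mul_assoc, ← ENNReal.rpow_add _ _ (hPne y) ENNReal.ofReal_ne_top]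
    norm_num
  have ha : ∀ y, (P y ^ ((1:ℝ)/2)) ^ (2:ℝ) = P y := by
    intro y
    rw [← ENNReal.rpow_mul]
    norm_num
  have hPint : ∫⁻ y, P y = 1 := by
    have : ∀ y, P y = ENNReal.ofReal (gaussianPDFReal x t.toNNReal y) := by
      intro y; simp only [hP]; rw [heatKernel_eq' t ht]
    simp_rw [this]
    exact lintegral_gaussianPDFReal_eq_one x (ne_of_gt (Real.toNNReal_pos.mpr ht))
  have hb : ∀ y, (P y ^ ((1:ℝ)/2) * F y) ^ (2:ℝ)
      = ENNReal.ofReal (heatKernel t x y * f y ^ 2) := by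
    intro y
    rw [ENNReal.mul_rpow_of_nonneg _ _ (by norm_num : (0:ℝ) ≤ 2), ha y,
      ENNReal.ofReal_rpow_of_nonneg (abs_nonneg _) (by norm_num : (0:ℝ) ≤ 2)]
    rw [ENNReal.ofReal_mul (heatKernel_nonneg t ht x y)]
    congr 1
    rw [show ((2:ℝ)) = ((2:ℕ):ℝ) by norm_num, Real.rpow_natCast, sq_abs]
  have step2 : (∫⁻ y, P y * F y) ≤
      (∫⁻ y, ENNReal.ofReal (heatKernel t x y * f y ^ 2)) ^ ((1:ℝ)/2) := by
    calc (∫⁻ y, P y * F y)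
        = ∫⁻ y, (fun y => P y ^ ((1:ℝ)/2)) y * ((fun y => P y ^ ((1:ℝ)/2) * F y) y) := by
          simp_rw [hmul]
      _ ≤ (∫⁻ y, (P y ^ ((1:ℝ)/2)) ^ (2:ℝ)) ^ ((1:ℝ)/2) *
            (∫⁻ y, (P y ^ ((1:ℝ)/2) * F y) ^ (2:ℝ)) ^ ((1:ℝ)/2) := by
          simpa only [Pi.mul_apply] using hold
      _ = _ := by
          simp_rw [ha, hb, hPint]
          rw [ENNReal.one_rpow, one_mul]
  -- combine
  have habs : ENNReal.ofReal (heatSemigroup t f x ^ 2)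
      = (ENNReal.ofReal |heatSemigroup t f x|) ^ (2:ℝ) := by
    rw [ENNReal.ofReal_rpow_of_nonneg (abs_nonneg _) (by norm_num : (0:ℝ) ≤ 2)]
    congr 1
    rw [show ((2:ℝ)) = ((2:ℕ):ℝ) by norm_num, Real.rpow_natCast, sq_abs]
  rw [habs]
  calc (ENNReal.ofReal |heatSemigroup t f x|) ^ (2:ℝ)
      ≤ (∫⁻ y, P y * F y) ^ (2:ℝ) :=
        ENNReal.rpow_le_rpow step1 (by norm_num)
    _ ≤ ((∫⁻ y, ENNReal.ofReal (heatKernel t x y * f y ^ 2)) ^ ((1:ℝ)/2)) ^ (2:ℝ) :=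
        ENNReal.rpow_le_rpow step2 (by norm_num)
    _ = _ := by rw [← ENNReal.rpow_mul]; norm_num

lemma heatKernel_measurable (t : ℝ) :
    Measurable (fun p : ℝ × ℝ => heatKernel t p.1 p.2) := by
  unfold heatKernel
  exact ((((measurable_fst.sub measurable_snd).pow_const 2).neg.div_const _).exp.const_mul _)

theorem heatSemigroup_weightedL2_bound (lam t : ℝ) (hlam : 0 < lam) (ht : 0 < t)
    (f : ℝ → ℝ) (hf : Measurable f)
    (hfL2 : Integrable (fun y => f y ^ 2 * Real.exp (-2 * lam * |y|))) :
    ((∫ x : ℝ, heatSemigroup t f x ^ 2 * Real.exp (-2 * lam * |x|)) ≤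
      2 * Real.exp (2 * lam ^ 2 * t) * ∫ y : ℝ, f y ^ 2 * Real.exp (-2 * lam * |y|)) ∧
    Real.sqrt (∫ x : ℝ, heatSemigroup t f x ^ 2 * Real.exp (-2 * lam * |x|)) ≤
      Real.sqrt 2 * Real.exp (lam ^ 2 * t) *
        Real.sqrt (∫ y : ℝ, f y ^ 2 * Real.exp (-2 * lam * |y|)) := by
  have hwm : Measurable (fun x : ℝ => Real.exp (-2 * lam * |x|)) :=
    (measurable_abs.const_mul _).exp
  have hKm := heatKernel_measurable t
  have hgm : Measurable (heatSemigroup t f) := by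
    have hsm : StronglyMeasurable (fun p : ℝ × ℝ => heatKernel t p.1 p.2 * f p.2) :=
      (hKm.mul (hf.comp measurable_snd)).stronglyMeasurable
    exact hsm.integral_prod_right'.measurable
  have hnn : ∀ x, 0 ≤ heatSemigroup t f x ^ 2 * Real.exp (-2 * lam * |x|) :=
    fun x => mul_nonneg (sq_nonneg _) (Real.exp_nonneg _)
  have hfnn : ∀ y, 0 ≤ f y ^ 2 * Real.exp (-2 * lam * |y|) :=
    fun y => mul_nonneg (sq_nonneg _) (Real.exp_nonneg _)
  have hRnn : 0 ≤ ∫ y, f y ^ 2 * Real.exp (-2 * lam * |y|) := integral_nonneg hfnn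
  have hCpos : 0 < 2 * Real.exp (2 * lam ^ 2 * t) := by positivity
  have hbound : (∫⁻ x, ENNReal.ofReal (heatSemigroup t f x ^ 2 * Real.exp (-2 * lam * |x|)))
      ≤ ENNReal.ofReal
          (2 * Real.exp (2 * lam ^ 2 * t) * ∫ y, f y ^ 2 * Real.exp (-2 * lam * |y|)) := by
    calc ∫⁻ x, ENNReal.ofReal (heatSemigroup t f x ^ 2 * Real.exp (-2 * lam * |x|))
        = ∫⁻ x, ENNReal.ofReal (heatSemigroup t f x ^ 2) *
            ENNReal.ofReal (Real.exp (-2 * lam * |x|)) := by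
          congr 1; funext x; rw [ENNReal.ofReal_mul (sq_nonneg _)]
      _ ≤ ∫⁻ x, (∫⁻ y, ENNReal.ofReal (heatKernel t x y * f y ^ 2)) *
            ENNReal.ofReal (Real.exp (-2 * lam * |x|)) :=
          lintegral_mono fun x => mul_le_mul_left (cs_pointwise t ht f hf x) _
      _ = ∫⁻ x, ∫⁻ y,
            ENNReal.ofReal (heatKernel t x y * f y ^ 2 * Real.exp (-2 * lam * |x|)) := by
          congr 1; funext x
          rw [← lintegral_mul_const _
            (by exact ((heatKernel_measurable_y t x ht).mul (hf.pow_const 2)).ennreal_ofReal :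
              Measurable fun y => ENNReal.ofReal (heatKernel t x y * f y ^ 2))]
          congr 1; funext y
          rw [ENNReal.ofReal_mul (mul_nonneg (heatKernel_nonneg t ht x y) (sq_nonneg _))]
      _ = ∫⁻ y, ∫⁻ x,
            ENNReal.ofReal (heatKernel t x y * f y ^ 2 * Real.exp (-2 * lam * |x|)) := by
          apply lintegral_lintegral_swap
          exact ((hKm.mul ((hf.comp measurable_snd).pow_const 2)).mul
            (hwm.comp measurable_fst)).ennreal_ofReal.aemeasurable
      _ ≤ ∫⁻ y, ENNReal.ofReal (f y ^ 2) *
            ENNReal.ofReal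
              (2 * Real.exp (2 * lam ^ 2 * t) * Real.exp (-2 * lam * |y|)) := by
          apply lintegral_mono
          intro y
          have heq : ∀ x,
              ENNReal.ofReal (heatKernel t x y * f y ^ 2 * Real.exp (-2 * lam * |x|))
                = ENNReal.ofReal (f y ^ 2) *
                  ENNReal.ofReal (heatKernel t x y * Real.exp (-2 * lam * |x|)) := by
            intro x
            rw [← ENNReal.ofReal_mul (sq_nonneg _)]
            congr 1; ring
          simp_rw [heq]
          have hKxy : Measurable (fun x => heatKernel t x y) := by
            unfold heatKernel
            exact (((measurable_id.sub_const y).pow_const 2).neg.div_const _).exp.const_mul _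
          rw [lintegral_const_mul _ (by exact (hKxy.mul hwm).ennreal_ofReal :
            Measurable fun x => ENNReal.ofReal (heatKernel t x y * Real.exp (-2 * lam * |x|)))]
          exact mul_le_mul_right (kernel_weight_bound lam t hlam ht y) _
      _ = ∫⁻ y, ENNReal.ofReal (2 * Real.exp (2 * lam ^ 2 * t)) *
            ENNReal.ofReal (f y ^ 2 * Real.exp (-2 * lam * |y|)) := by
          congr 1; funext y
          rw [← ENNReal.ofReal_mul (sq_nonneg _), ← ENNReal.ofReal_mul hCpos.le]
          congr 1; ring
      _ = ENNReal.ofReal (2 * Real.exp (2 * lam ^ 2 * t)) *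
            ENNReal.ofReal (∫ y, f y ^ 2 * Real.exp (-2 * lam * |y|)) := by
          rw [lintegral_const_mul _ (by exact ((hf.pow_const 2).mul hwm).ennreal_ofReal :
            Measurable fun y => ENNReal.ofReal (f y ^ 2 * Real.exp (-2 * lam * |y|))),
            ofReal_integral_eq_lintegral_ofReal hfL2 (ae_of_all _ hfnn)]
      _ = _ := (ENNReal.ofReal_mul hCpos.le).symm
  have h1 : (∫ x, heatSemigroup t f x ^ 2 * Real.exp (-2 * lam * |x|)) ≤
      2 * Real.exp (2 * lam ^ 2 * t) * ∫ y, f y ^ 2 * Real.exp (-2 * lam * |y|) := by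
    rw [integral_eq_lintegral_of_nonneg_ae (ae_of_all _ hnn)
      (((hgm.pow_const 2).mul hwm).aestronglyMeasurable)]
    calc (∫⁻ x, ENNReal.ofReal
            (heatSemigroup t f x ^ 2 * Real.exp (-2 * lam * |x|))).toReal
        ≤ (ENNReal.ofReal (2 * Real.exp (2 * lam ^ 2 * t) *
            ∫ y, f y ^ 2 * Real.exp (-2 * lam * |y|))).toReal :=
          ENNReal.toReal_mono ENNReal.ofReal_ne_top hbound
      _ = _ := ENNReal.toReal_ofReal (by positivity)
  refine ⟨h1, ?_⟩
  refine (Real.sqrt_le_sqrt h1).trans (le_of_eq ?_)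
  rw [show Real.exp (2 * lam ^ 2 * t) = Real.exp (lam ^ 2 * t) ^ 2 by
    rw [pow_two (Real.exp (lam ^ 2 * t)), ← Real.exp_add]; congr 1; ring]
  rw [Real.sqrt_mul (by positivity), Real.sqrt_mul (by norm_num : (0:ℝ) ≤ 2),
    Real.sqrt_sq (Real.exp_nonneg _)]
end

section
/- Let f ∈ L²_tem and t > 0. Then for every x ∈ ℝ the integral P_t f(x) = ∫_ℝ p_t(x,y) f(y) dy converges absolutely, the function x ↦ P_t f(x) is continuous on ℝ, and P_t f ∈ L²_tem; moreover for every λ > 0, ‖P_t f‖_{L²_λ} ≤ √2 e^{λ² t} ‖f‖_{L²_λ}. -/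
open MeasureTheory Real

/-- The weighted `L²` norm `‖f‖_{L²_λ} = (∫ |f(x)|² e^{-2λ|x|} dx)^{1/2}`. -/
noncomputable def wnorm (lam : ℝ) (f : ℝ → ℝ) : ℝ :=
  Real.sqrt (∫ x : ℝ, f x ^ 2 * Real.exp (-2 * lam * |x|))

/-- The space `L²_tem` of continuous functions with all weighted `L²` norms finite. -/
def L2tem : Set (ℝ → ℝ) :=
  {f | Continuous f ∧ ∀ lam > (0 : ℝ),
    Integrable (fun x => f x ^ 2 * Real.exp (-2 * lam * |x|))}

open scoped ENNReal

set_option linter.unusedVariables false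
set_option linter.unusedSectionVars false

-- Gaussian with linear term
lemma gauss_lin_integrable {t : ℝ} (ht : 0 < t) (s : ℝ) :
    Integrable (fun u : ℝ => Real.exp (-u ^ 2 / (2 * t) + s * u)) := by
  have h : ∀ u : ℝ, Real.exp (-u ^ 2 / (2 * t) + s * u)
      = Real.exp (-(1 / (2 * t)) * (u - s * t) ^ 2) * Real.exp (s ^ 2 * t / 2) := by
    intro u
    rw [← Real.exp_add]
    congr 1
    field_simp
    ring
  simp_rw [h]
  exact ((integrable_exp_neg_mul_sq (by positivity : (0:ℝ) < 1 / (2*t))).comp_sub_right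
    (s * t)).mul_const _

lemma gauss_lin_integral {t : ℝ} (ht : 0 < t) (s : ℝ) :
    ∫ u : ℝ, Real.exp (-u ^ 2 / (2 * t) + s * u)
      = Real.sqrt (2 * π * t) * Real.exp (s ^ 2 * t / 2) := by
  have h : ∀ u : ℝ, Real.exp (-u ^ 2 / (2 * t) + s * u)
      = Real.exp (-(1 / (2 * t)) * (u - s * t) ^ 2) * Real.exp (s ^ 2 * t / 2) := by
    intro u
    rw [← Real.exp_add]
    congr 1
    field_simp
    ring
  simp_rw [h]
  rw [integral_mul_const, integral_sub_right_eq_self (fun u => Real.exp (-(1/(2*t)) * u ^ 2)) (s*t),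
    integral_gaussian]
  have : π / (1 / (2 * t)) = 2 * π * t := by field_simp
  rw [this]

-- completing the square bound
lemma quad_le {a : ℝ} (ha : 0 < a) (s w : ℝ) :
    -w ^ 2 / a + s * w ≤ -w ^ 2 / (2 * a) + s ^ 2 * a / 2 := by
  rw [← sub_nonneg]
  have h : (-w ^ 2 / (2 * a) + s ^ 2 * a / 2) - (-w ^ 2 / a + s * w)
      = (w - s * a) ^ 2 / (2 * a) := by field_simp; ring
  rw [h]; positivity

-- Cauchy-Schwarz for integrals
lemma integral_CS {u v : ℝ → ℝ} (hu : MemLp u 2 (volume : Measure ℝ))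
    (hv : MemLp v 2 (volume : Measure ℝ)) :
    (∫ y, u y * v y) ^ 2 ≤ (∫ y, u y ^ 2) * (∫ y, v y ^ 2) := by
  have huv : Integrable (fun y => u y * v y) := by
    have := (hv.smul (φ := u) (r := 1) hu)
    rw [memLp_one_iff_integrable] at this
    exact this
  have hu2 := hu.integrable_sq
  have hv2 := hv.integrable_sq
  have key : ∀ r : ℝ, 0 ≤ (∫ y, v y ^ 2) * (r * r) + (2 * ∫ y, u y * v y) * r
      + (∫ y, u y ^ 2) := by
    intro r
    have h1 : Integrable (fun y => (u y + r * v y) ^ 2) := by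
      have : (fun y => (u y + r * v y) ^ 2)
          = fun y => u y ^ 2 + (2 * r) * (u y * v y) + r ^ 2 * v y ^ 2 := by
        funext y; ring
      rw [this]
      exact (hu2.add (huv.const_mul _)).add (hv2.const_mul _)
    have h2 : 0 ≤ ∫ y, (u y + r * v y) ^ 2 := integral_nonneg fun y => sq_nonneg _
    have h3 : ∫ y, (u y + r * v y) ^ 2
        = (∫ y, u y ^ 2) + (2 * r) * (∫ y, u y * v y) + r ^ 2 * (∫ y, v y ^ 2) := by
      have e : (fun y => (u y + r * v y) ^ 2)
          = fun y => (u y ^ 2 + (2 * r) * (u y * v y)) + r ^ 2 * v y ^ 2 := by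
        funext y; ring
      have ha : Integrable (fun y => u y ^ 2 + (2 * r) * (u y * v y)) :=
        hu2.add (huv.const_mul _)
      have hb : Integrable (fun y => (2 * r) * (u y * v y)) := huv.const_mul _
      have hc : Integrable (fun y => r ^ 2 * v y ^ 2) := hv2.const_mul _
      rw [e, integral_add ha hc, integral_add hu2 hb, integral_const_mul, integral_const_mul]
    nlinarith [h2, h3]
  have := discrim_le_zero key
  rw [discrim] at this
  nlinarith [this]

lemma sqrt2pit_pos {t : ℝ} (ht : 0 < t) : 0 < Real.sqrt (2 * π * t) :=
  Real.sqrt_pos.2 (by positivity)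

lemma hk_nonneg {t : ℝ} (ht : 0 < t) (x y : ℝ) : 0 ≤ heatKernel t x y := by
  unfold heatKernel
  positivity

lemma hk_symm (t x y : ℝ) : heatKernel t x y = heatKernel t y x := by
  unfold heatKernel
  rw [show (x - y) ^ 2 = (y - x) ^ 2 by ring]

lemma hk_continuous {t : ℝ} (ht : 0 < t) :
    Continuous fun p : ℝ × ℝ => heatKernel t p.1 p.2 := by
  unfold heatKernel
  fun_prop

lemma hk_mul_exp_eq {t : ℝ} (x s y : ℝ) :
    heatKernel t x y * Real.exp (s * (y - x))
      = (Real.sqrt (2 * π * t))⁻¹ * Real.exp (-(y - x) ^ 2 / (2 * t) + s * (y - x)) := by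
  unfold heatKernel
  rw [mul_assoc, ← Real.exp_add, show (x - y) ^ 2 = (y - x) ^ 2 by ring]

lemma hk_mgf_integrable {t : ℝ} (ht : 0 < t) (x s : ℝ) :
    Integrable (fun y => heatKernel t x y * Real.exp (s * (y - x))) := by
  simp_rw [hk_mul_exp_eq]
  exact ((gauss_lin_integrable ht s).comp_sub_right x).const_mul _

lemma hk_mgf_integral {t : ℝ} (ht : 0 < t) (x s : ℝ) :
    ∫ y, heatKernel t x y * Real.exp (s * (y - x)) = Real.exp (s ^ 2 * t / 2) := by
  simp_rw [hk_mul_exp_eq]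
  rw [integral_const_mul,
    integral_sub_right_eq_self (fun u => Real.exp (-u ^ 2 / (2 * t) + s * u)) x,
    gauss_lin_integral ht s, ← mul_assoc,
    inv_mul_cancel₀ (ne_of_gt (sqrt2pit_pos ht)), one_mul]

lemma hk_integrable {t : ℝ} (ht : 0 < t) (x : ℝ) :
    Integrable (fun y => heatKernel t x y) := by
  have := hk_mgf_integrable ht x 0
  simpa using this

lemma hk_integral_one {t : ℝ} (ht : 0 < t) (x : ℝ) :
    ∫ y, heatKernel t x y = 1 := by
  have := hk_mgf_integral ht x 0
  simpa using this

-- integrating over the first variable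
lemma hk_mgf_integrable' {t : ℝ} (ht : 0 < t) (y s : ℝ) :
    Integrable (fun x => heatKernel t x y * Real.exp (s * (x - y))) := by
  simp_rw [fun x => hk_symm t x y]
  exact hk_mgf_integrable ht y s

lemma hk_mgf_integral' {t : ℝ} (ht : 0 < t) (y s : ℝ) :
    ∫ x, heatKernel t x y * Real.exp (s * (x - y)) = Real.exp (s ^ 2 * t / 2) := by
  simp_rw [fun x => hk_symm t x y]
  exact hk_mgf_integral ht y s

lemma hk_integrable' {t : ℝ} (ht : 0 < t) (y : ℝ) :
    Integrable (fun x => heatKernel t x y) := by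
  simp_rw [fun x => hk_symm t x y]
  exact hk_integrable ht y

-- pointwise bound used for the weighted integral in x
lemma weight_pointwise {lam x y : ℝ} (hlam : 0 ≤ lam) :
    Real.exp (-2 * lam * |x|) ≤
      (Real.exp (2 * lam * (x - y)) + Real.exp (-(2 * lam) * (x - y))) *
        Real.exp (-2 * lam * |y|) := by
  have h1 : Real.exp (-2 * lam * |x|) ≤ Real.exp (2 * lam * |x - y|) * Real.exp (-2 * lam * |y|) := by
    rw [← Real.exp_add]
    apply Real.exp_le_exp.2
    have h := abs_add_le x (y - x)
    rw [abs_sub_comm y x] at h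
    have hxy : x + (y - x) = y := by ring
    rw [hxy] at h
    nlinarith [h]
  refine h1.trans ?_
  gcongr ?_ * _
  rcases abs_choice (x - y) with h | h
  · rw [h]
    nlinarith [Real.exp_pos (-(2 * lam) * (x - y))]
  · rw [h, show 2 * lam * -(x - y) = -(2*lam) * (x-y) by ring]
    nlinarith [Real.exp_pos (2 * lam * (x - y))]

lemma weight_integrable {t lam : ℝ} (ht : 0 < t) (hlam : 0 ≤ lam) (y : ℝ) :
    Integrable (fun x => heatKernel t x y * Real.exp (-2 * lam * |x|)) := by
  have hR : Integrable (fun x => heatKernel t x y *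
      ((Real.exp (2 * lam * (x - y)) + Real.exp (-(2 * lam) * (x - y))) *
        Real.exp (-2 * lam * |y|))) := by
    have h1 := hk_mgf_integrable' ht y (2 * lam)
    have h2 := hk_mgf_integrable' ht y (-(2 * lam))
    have : (fun x => heatKernel t x y *
        ((Real.exp (2 * lam * (x - y)) + Real.exp (-(2 * lam) * (x - y))) *
          Real.exp (-2 * lam * |y|)))
        = fun x => (heatKernel t x y * Real.exp (2 * lam * (x - y))
            + heatKernel t x y * Real.exp (-(2 * lam) * (x - y))) * Real.exp (-2 * lam * |y|) := by
      funext x; ring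
    rw [this]
    exact (h1.add h2).mul_const _
  refine hR.mono ?_ ?_
  · apply Continuous.aestronglyMeasurable
    have := hk_continuous ht
    fun_prop
  · filter_upwards with x
    have h0 := hk_nonneg ht x y
    rw [Real.norm_eq_abs, abs_of_nonneg (mul_nonneg h0 (Real.exp_pos _).le), Real.norm_eq_abs,
      abs_of_nonneg (mul_nonneg h0 (by positivity))]
    exact mul_le_mul_of_nonneg_left (weight_pointwise hlam) h0

lemma weight_integral_le {t lam : ℝ} (ht : 0 < t) (hlam : 0 ≤ lam) (y : ℝ) :
    ∫ x, heatKernel t x y * Real.exp (-2 * lam * |x|)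
      ≤ 2 * Real.exp (2 * lam ^ 2 * t) * Real.exp (-2 * lam * |y|) := by
  have h1 := hk_mgf_integrable' ht y (2 * lam)
  have h2 := hk_mgf_integrable' ht y (-(2 * lam))
  have hR : Integrable (fun x => (heatKernel t x y * Real.exp (2 * lam * (x - y))
      + heatKernel t x y * Real.exp (-(2 * lam) * (x - y))) * Real.exp (-2 * lam * |y|)) :=
    (h1.add h2).mul_const _
  have hle : ∫ x, heatKernel t x y * Real.exp (-2 * lam * |x|)
      ≤ ∫ x, (heatKernel t x y * Real.exp (2 * lam * (x - y))
          + heatKernel t x y * Real.exp (-(2 * lam) * (x - y))) * Real.exp (-2 * lam * |y|) := by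
    refine integral_mono (weight_integrable ht hlam y) hR ?_
    intro x
    have h0 := hk_nonneg ht x y
    have := weight_pointwise (x := x) (y := y) hlam
    calc heatKernel t x y * Real.exp (-2 * lam * |x|)
        ≤ heatKernel t x y * ((Real.exp (2 * lam * (x - y)) + Real.exp (-(2 * lam) * (x - y))) *
            Real.exp (-2 * lam * |y|)) := mul_le_mul_of_nonneg_left this h0
      _ = (heatKernel t x y * Real.exp (2 * lam * (x - y))
          + heatKernel t x y * Real.exp (-(2 * lam) * (x - y))) * Real.exp (-2 * lam * |y|) := by
          ring
  refine hle.trans ?_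
  rw [integral_mul_const, integral_add h1 h2, hk_mgf_integral' ht y (2 * lam),
    hk_mgf_integral' ht y (-(2 * lam))]
  have : (2 * lam) ^ 2 * t / 2 = 2 * lam ^ 2 * t := by ring
  rw [show (-(2 * lam)) ^ 2 = (2 * lam) ^ 2 by ring, this]
  exact le_of_eq (by ring)

-- Lemma H : kernel bound with weights
lemma hk_le {t lam : ℝ} (ht : 0 < t) (hlam : 0 ≤ lam) (x y : ℝ) :
    heatKernel t x y ≤ (Real.sqrt (2 * π * t))⁻¹
      * Real.exp (4 * lam ^ 2 * t + 2 * lam * |x|) * Real.exp (-2 * lam * |y|) := by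
  unfold heatKernel
  have hexp : Real.exp (-(x - y) ^ 2 / (2 * t))
      ≤ Real.exp (4 * lam ^ 2 * t + 2 * lam * |x|) * Real.exp (-2 * lam * |y|) := by
    rw [← Real.exp_add]
    apply Real.exp_le_exp.2
    have habs : |y| ≤ |x| + |x - y| := by
      have h := abs_add_le x (y - x)
      rw [abs_sub_comm y x] at h
      have hxy : x + (y - x) = y := by ring
      rw [hxy] at h
      linarith
    have hq := quad_le (by positivity : (0:ℝ) < 2 * t) (2 * lam) |x - y|
    rw [sq_abs] at hq
    have h4 : -(x - y) ^ 2 / (2 * (2 * t)) ≤ 0 :=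
      div_nonpos_of_nonpos_of_nonneg (neg_nonpos.2 (sq_nonneg _)) (by positivity)
    nlinarith [hq, habs, h4, mul_le_mul_of_nonneg_left habs
      (by linarith : (0:ℝ) ≤ 2 * lam)]
  calc (Real.sqrt (2 * π * t))⁻¹ * Real.exp (-(x - y) ^ 2 / (2 * t))
      ≤ (Real.sqrt (2 * π * t))⁻¹ * (Real.exp (4 * lam ^ 2 * t + 2 * lam * |x|)
        * Real.exp (-2 * lam * |y|)) := by
        exact mul_le_mul_of_nonneg_left hexp (by positivity)
    _ = _ := by ring


-- MemLp of Gaussian-ish × e^{|·|}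
lemma memL2_gauss_exp {t b : ℝ} (ht : 0 < t) (hb : 0 < b) (x : ℝ) :
    MemLp (fun y => Real.exp (-(x - y) ^ 2 / b) * Real.exp (|y|)) 2 (volume : Measure ℝ) := by
  rw [memLp_two_iff_integrable_sq (by fun_prop : Continuous fun y =>
    Real.exp (-(x - y) ^ 2 / b) * Real.exp (|y|)).aestronglyMeasurable]
  have hpt : ∀ y, (Real.exp (-(x - y) ^ 2 / b) * Real.exp (|y|)) ^ 2
      ≤ Real.exp (2 * |x| + 2 * b) * Real.exp (-(1 / b) * (x - y) ^ 2) := by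
    intro y
    rw [mul_pow, sq (Real.exp (-(x - y) ^ 2 / b)), sq (Real.exp |y|), ← Real.exp_add,
      ← Real.exp_add, ← Real.exp_add, ← Real.exp_add]
    apply Real.exp_le_exp.2
    have habs : |y| ≤ |x| + |x - y| := by
      have h := abs_add_le x (y - x)
      rw [abs_sub_comm y x] at h
      have hxy : x + (y - x) = y := by ring
      rw [hxy] at h; linarith
    have hq := quad_le hb 2 |x - y|
    rw [sq_abs] at hq
    have h4 : -(x - y) ^ 2 / (2 * b) ≤ 0 :=
      div_nonpos_of_nonpos_of_nonneg (neg_nonpos.2 (sq_nonneg _)) (by positivity)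
    have hid : -(1 / b) * (x - y) ^ 2 = -((x - y) ^ 2 / b) := by ring
    ring_nf at hq h4 hid ⊢
    nlinarith [hq, habs, h4, hid]
  have hg : Integrable (fun y : ℝ => Real.exp (2 * |x| + 2 * b)
      * Real.exp (-(1 / b) * (x - y) ^ 2)) := by
    have : Integrable (fun y : ℝ => Real.exp (-(1 / b) * y ^ 2)) :=
      integrable_exp_neg_mul_sq (by positivity)
    have h2 : Integrable (fun y : ℝ => Real.exp (-(1 / b) * (y - x) ^ 2)) :=
      this.comp_sub_right x
    have h3 : (fun y : ℝ => Real.exp (-(1 / b) * (x - y) ^ 2))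
        = fun y : ℝ => Real.exp (-(1 / b) * (y - x) ^ 2) := by
      funext y; rw [show (x - y) ^ 2 = (y - x) ^ 2 by ring]
    have h2' : Integrable (fun y : ℝ => Real.exp (-(1 / b) * (x - y) ^ 2)) := by
      rw [h3]; exact h2
    exact h2'.const_mul _
  refine hg.mono ?_ ?_
  · exact (by fun_prop : Continuous fun y =>
      (Real.exp (-(x - y) ^ 2 / b) * Real.exp (|y|)) ^ 2).aestronglyMeasurable
  · filter_upwards with y
    simp only [Real.norm_eq_abs]
    rw [abs_of_nonneg (sq_nonneg _),
      abs_of_nonneg (le_of_lt (mul_pos (Real.exp_pos _) (Real.exp_pos _)))]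
    exact hpt y

lemma integrable_of_memL2_mul {u v : ℝ → ℝ} (hu : MemLp u 2 (volume : Measure ℝ))
    (hv : MemLp v 2 (volume : Measure ℝ)) : Integrable (fun y => u y * v y) := by
  have h := hv.smul (φ := u) (r := 1) hu
  rw [memLp_one_iff_integrable] at h
  exact h

lemma hk_cont_left {t : ℝ} (ht : 0 < t) (y : ℝ) : Continuous fun x => heatKernel t x y := by
  unfold heatKernel; fun_prop

lemma hk_cont_right {t : ℝ} (ht : 0 < t) (x : ℝ) : Continuous fun y => heatKernel t x y := by
  unfold heatKernel; fun_prop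


section WithF
variable {f : ℝ → ℝ} {t : ℝ} (ht : 0 < t) (hfc : Continuous f)
  (hfi : ∀ lam > (0:ℝ), Integrable (fun x => f x ^ 2 * Real.exp (-2 * lam * |x|)))
include ht hfc hfi

-- MemLp of f ·e^{-|·|}
lemma memL2_fw : MemLp (fun y => f y * Real.exp (-|y|)) 2 (volume : Measure ℝ) := by
  rw [memLp_two_iff_integrable_sq (by fun_prop : Continuous fun y => f y * Real.exp (-|y|)).aestronglyMeasurable]
  have : (fun y => (f y * Real.exp (-|y|)) ^ 2) = fun y => f y ^ 2 * Real.exp (-2 * 1 * |y|) := by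
    funext y
    rw [mul_pow, sq (Real.exp (-|y|)), ← Real.exp_add]
    ring_nf
  rw [this]
  exact hfi 1 one_pos

lemma memL2_fw_abs : MemLp (fun y => |f y| * Real.exp (-|y|)) 2 (volume : Measure ℝ) := by
  refine memL2_fw ht (hfc.abs) (fun lam hlam => ?_)
  simp_rw [sq_abs]
  exact hfi lam hlam


/-- Part 1: integrability of the heat semigroup integrand. -/
lemma integrable_hk_mul_f (x : ℝ) : Integrable (fun y => heatKernel t x y * f y) := by
  have h := integrable_of_memL2_mul
    (((memL2_gauss_exp ht (by positivity : (0:ℝ) < 2 * t) x)).const_mul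
      ((Real.sqrt (2 * π * t))⁻¹))
    (memL2_fw ht hfc hfi)
  have key : (fun y => ((Real.sqrt (2 * π * t))⁻¹ *
      (Real.exp (-(x - y) ^ 2 / (2 * t)) * Real.exp (|y|))) * (f y * Real.exp (-|y|)))
      = fun y => heatKernel t x y * f y := by
    funext y
    unfold heatKernel
    have e1 : Real.exp (|y|) * Real.exp (-|y|) = 1 := by
      rw [← Real.exp_add, add_neg_cancel, Real.exp_zero]
    calc ((Real.sqrt (2 * π * t))⁻¹ *
        (Real.exp (-(x - y) ^ 2 / (2 * t)) * Real.exp (|y|))) * (f y * Real.exp (-|y|))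
        = ((Real.sqrt (2 * π * t))⁻¹ * Real.exp (-(x - y) ^ 2 / (2 * t)) * f y)
          * (Real.exp (|y|) * Real.exp (-|y|)) := by ring
      _ = _ := by rw [e1, mul_one]
  rw [← key]
  exact h

/-- Integrability of `y ↦ p_t(x,y) f(y)²` (used for Jensen). -/
lemma integrable_hk_mul_f_sq (x : ℝ) :
    Integrable (fun y => heatKernel t x y * f y ^ 2) := by
  have hb : Integrable (fun y => ((Real.sqrt (2 * π * t))⁻¹
      * Real.exp (4 * 1 ^ 2 * t + 2 * 1 * |x|)) * (f y ^ 2 * Real.exp (-2 * 1 * |y|))) :=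
    (hfi 1 one_pos).const_mul _
  refine hb.mono ?_ ?_
  · exact ((hk_cont_right ht x).mul (hfc.pow 2)).aestronglyMeasurable
  · filter_upwards with y
    rw [Real.norm_eq_abs, Real.norm_eq_abs,
      abs_of_nonneg (mul_nonneg (hk_nonneg ht x y) (sq_nonneg _))]
    have h1 := hk_le ht (zero_le_one) x y
    calc heatKernel t x y * f y ^ 2
        ≤ ((Real.sqrt (2 * π * t))⁻¹ * Real.exp (4 * 1 ^ 2 * t + 2 * 1 * |x|)
            * Real.exp (-2 * 1 * |y|)) * f y ^ 2 :=
          mul_le_mul_of_nonneg_right h1 (sq_nonneg _)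
      _ = ((Real.sqrt (2 * π * t))⁻¹ * Real.exp (4 * 1 ^ 2 * t + 2 * 1 * |x|))
            * (f y ^ 2 * Real.exp (-2 * 1 * |y|)) := by ring
      _ ≤ |((Real.sqrt (2 * π * t))⁻¹ * Real.exp (4 * 1 ^ 2 * t + 2 * 1 * |x|))
            * (f y ^ 2 * Real.exp (-2 * 1 * |y|))| := le_abs_self _

/-- Part 2: continuity of the heat semigroup. -/
lemma Ptf_continuous : Continuous (fun x => ∫ y, heatKernel t x y * f y) := by
  rw [continuous_iff_continuousAt]
  intro x₀
  obtain ⟨R, hR⟩ : ∃ R : ℝ, R = |x₀| + 1 := ⟨_, rfl⟩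
  obtain ⟨c, hc⟩ : ∃ c : ℝ, c = (Real.sqrt (2 * π * t))⁻¹ := ⟨_, rfl⟩
  refine continuousAt_of_dominated (bound := fun y => c * Real.exp (R ^ 2 / t)
    * (Real.exp (-y ^ 2 / (4 * t)) * |f y|)) ?_ ?_ ?_ ?_
  · filter_upwards with x
    exact ((hk_cont_right ht x).mul hfc).aestronglyMeasurable
  · have hball : Metric.ball x₀ 1 ∈ nhds x₀ := Metric.ball_mem_nhds _ one_pos
    filter_upwards [hball] with x hx
    filter_upwards with y
    have hxR : |x| ≤ R := by
      have := abs_sub_abs_le_abs_sub x x₀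
      rw [Metric.mem_ball, Real.dist_eq] at hx
      rw [hR]
      linarith
    rw [Real.norm_eq_abs, abs_mul]
    have hhk : |heatKernel t x y| = heatKernel t x y := abs_of_nonneg (hk_nonneg ht x y)
    rw [hhk]
    have hkey : heatKernel t x y ≤ c * Real.exp (R ^ 2 / t) * Real.exp (-y ^ 2 / (4 * t)) := by
      unfold heatKernel
      rw [hc, mul_assoc (c := Real.exp (-y ^ 2 / (4 * t))), ← Real.exp_add]
      refine mul_le_mul_of_nonneg_left (Real.exp_le_exp.2 ?_) ?_
      · have hsq : y ^ 2 / 2 - 2 * R ^ 2 ≤ (x - y) ^ 2 := by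
          have hx2 : x ^ 2 ≤ R ^ 2 := by
            have h0R : (0:ℝ) ≤ R := by rw [hR]; positivity
            nlinarith [abs_nonneg x, sq_abs x, hxR]
          nlinarith [sq_nonneg (y - 2 * x), hx2, sq_nonneg x, sq_nonneg (x - y)]
        have h2t : (0:ℝ) < 2 * t := by positivity
        have hdiv : -(x - y) ^ 2 / (2 * t) ≤ (-(y ^ 2 / 2) + 2 * R ^ 2) / (2 * t) := by
          gcongr
          linarith
        refine hdiv.trans (le_of_eq ?_)
        field_simp
        ring
      · positivity
    calc heatKernel t x y * |f y|
        ≤ (c * Real.exp (R ^ 2 / t) * Real.exp (-y ^ 2 / (4 * t))) * |f y| :=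
          mul_le_mul_of_nonneg_right hkey (abs_nonneg _)
      _ = c * Real.exp (R ^ 2 / t) * (Real.exp (-y ^ 2 / (4 * t)) * |f y|) := by ring
  · -- integrability of the bound
    have h1 : MemLp (fun y => Real.exp (-(0 - y) ^ 2 / (4 * t)) * Real.exp (|y|)) 2
        (volume : Measure ℝ) := memL2_gauss_exp ht (by positivity) 0
    have h2 := memL2_fw_abs ht hfc hfi
    have h3 := integrable_of_memL2_mul h1 h2
    have key : (fun y => (Real.exp (-(0 - y) ^ 2 / (4 * t)) * Real.exp (|y|))
        * (|f y| * Real.exp (-|y|))) = fun y => Real.exp (-y ^ 2 / (4 * t)) * |f y| := by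
      funext y
      have e1 : Real.exp (|y|) * Real.exp (-|y|) = 1 := by
        rw [← Real.exp_add, add_neg_cancel, Real.exp_zero]
      have e2 : (0 - y) ^ 2 = y ^ 2 := by ring
      calc (Real.exp (-(0 - y) ^ 2 / (4 * t)) * Real.exp (|y|)) * (|f y| * Real.exp (-|y|))
          = Real.exp (-(0 - y) ^ 2 / (4 * t)) * |f y| * (Real.exp (|y|) * Real.exp (-|y|)) := by
            ring
        _ = _ := by rw [e1, mul_one, e2]
    rw [key] at h3
    exact h3.const_mul _
  · filter_upwards with y
    exact ((hk_cont_left ht y).mul continuous_const).continuousAt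

/-- Jensen via Cauchy-Schwarz. -/
lemma jensen_sq (x : ℝ) :
    (∫ y, heatKernel t x y * f y) ^ 2 ≤ ∫ y, heatKernel t x y * f y ^ 2 := by
  have hsq : ∀ y, Real.sqrt (heatKernel t x y) * Real.sqrt (heatKernel t x y)
      = heatKernel t x y := fun y => Real.mul_self_sqrt (hk_nonneg ht x y)
  have hu : MemLp (fun y => Real.sqrt (heatKernel t x y)) 2 (volume : Measure ℝ) := by
    rw [memLp_two_iff_integrable_sq
      ((hk_cont_right ht x).sqrt).aestronglyMeasurable]
    simp_rw [sq, hsq]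
    exact hk_integrable ht x
  have hv : MemLp (fun y => Real.sqrt (heatKernel t x y) * f y) 2 (volume : Measure ℝ) := by
    rw [memLp_two_iff_integrable_sq (f := fun y => Real.sqrt (heatKernel t x y) * f y)
      (((hk_cont_right ht x).sqrt).mul hfc).aestronglyMeasurable]
    have e : (fun y => (Real.sqrt (heatKernel t x y) * f y) ^ 2)
        = fun y => heatKernel t x y * f y ^ 2 := by
      funext y
      rw [mul_pow, sq, hsq]
    rw [e]
    exact integrable_hk_mul_f_sq ht hfc hfi x
  have h := integral_CS hu hv
  have e1 : (fun y => Real.sqrt (heatKernel t x y) * (Real.sqrt (heatKernel t x y) * f y))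
      = fun y => heatKernel t x y * f y := by
    funext y
    rw [← mul_assoc, hsq]
  have e2 : (fun y => Real.sqrt (heatKernel t x y) ^ 2) = fun y => heatKernel t x y := by
    funext y; rw [sq, hsq]
  have e3 : (fun y => (Real.sqrt (heatKernel t x y) * f y) ^ 2)
      = fun y => heatKernel t x y * f y ^ 2 := by
    funext y; rw [mul_pow, sq, hsq]
  rw [e1, e2, e3, hk_integral_one ht x, one_mul] at h
  exact h

variable {lam : ℝ} (hlam : 0 < lam)
include hlam

/-- The double integrand is integrable on the product. -/
lemma prod_integrable :
    Integrable (fun q : ℝ × ℝ => heatKernel t q.1 q.2 * f q.2 ^ 2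
      * Real.exp (-2 * lam * |q.1|)) ((volume : Measure ℝ).prod volume) := by
  have hcont : Continuous (fun q : ℝ × ℝ => heatKernel t q.1 q.2 * f q.2 ^ 2
      * Real.exp (-2 * lam * |q.1|)) := by
    have h1 := hk_continuous ht
    fun_prop
  rw [integrable_prod_iff' hcont.aestronglyMeasurable]
  constructor
  · filter_upwards with y
    have h := (weight_integrable ht hlam.le y).mul_const (f y ^ 2)
    have e : (fun x => heatKernel t x y * Real.exp (-2 * lam * |x|) * f y ^ 2)
        = fun x => heatKernel t x y * f y ^ 2 * Real.exp (-2 * lam * |x|) := by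
      funext x; ring
    rw [e] at h
    exact h
  · have hmeas : AEStronglyMeasurable
        (fun y => ∫ x, ‖heatKernel t x y * f y ^ 2 * Real.exp (-2 * lam * |x|)‖)
        (volume : Measure ℝ) := by
      have hsm : StronglyMeasurable (fun q : ℝ × ℝ => ‖heatKernel t q.1 q.2 * f q.2 ^ 2
          * Real.exp (-2 * lam * |q.1|)‖) := (hcont.norm).stronglyMeasurable
      exact (hsm.integral_prod_left').aestronglyMeasurable
    have hbound : Integrable (fun y => (2 * Real.exp (2 * lam ^ 2 * t))
        * (f y ^ 2 * Real.exp (-2 * lam * |y|))) := (hfi lam hlam).const_mul _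
    refine hbound.mono hmeas ?_
    filter_upwards with y
    have hnn : ∀ x, 0 ≤ heatKernel t x y * f y ^ 2 * Real.exp (-2 * lam * |x|) :=
      fun x => mul_nonneg (mul_nonneg (hk_nonneg ht x y) (sq_nonneg _)) (Real.exp_pos _).le
    have e : (fun x => ‖heatKernel t x y * f y ^ 2 * Real.exp (-2 * lam * |x|)‖)
        = fun x => (heatKernel t x y * Real.exp (-2 * lam * |x|)) * f y ^ 2 := by
      funext x
      rw [Real.norm_eq_abs, abs_of_nonneg (hnn x)]
      ring
    rw [Real.norm_eq_abs, e, integral_mul_const]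
    have h1 : (∫ x, heatKernel t x y * Real.exp (-2 * lam * |x|)) * f y ^ 2
        ≤ (2 * Real.exp (2 * lam ^ 2 * t) * Real.exp (-2 * lam * |y|)) * f y ^ 2 :=
      mul_le_mul_of_nonneg_right (weight_integral_le ht hlam.le y) (sq_nonneg _)
    have h0 : 0 ≤ (∫ x, heatKernel t x y * Real.exp (-2 * lam * |x|)) * f y ^ 2 :=
      mul_nonneg (integral_nonneg fun x =>
        mul_nonneg (hk_nonneg ht x y) (Real.exp_pos _).le) (sq_nonneg _)
    rw [abs_of_nonneg h0]
    calc (∫ x, heatKernel t x y * Real.exp (-2 * lam * |x|)) * f y ^ 2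
        ≤ (2 * Real.exp (2 * lam ^ 2 * t) * Real.exp (-2 * lam * |y|)) * f y ^ 2 := h1
      _ = 2 * Real.exp (2 * lam ^ 2 * t) * (f y ^ 2 * Real.exp (-2 * lam * |y|)) := by ring
      _ ≤ ‖2 * Real.exp (2 * lam ^ 2 * t) * (f y ^ 2 * Real.exp (-2 * lam * |y|))‖ := by
          rw [Real.norm_eq_abs]; exact le_abs_self _

lemma hII : Integrable (fun x => (∫ y, heatKernel t x y * f y ^ 2)
    * Real.exp (-2 * lam * |x|)) := by
  have h := (prod_integrable ht hfc hfi hlam).integral_prod_left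
  have ex : (fun x => ∫ y, heatKernel t x y * f y ^ 2 * Real.exp (-2 * lam * |x|))
      = fun x => (∫ y, heatKernel t x y * f y ^ 2) * Real.exp (-2 * lam * |x|) := by
    funext x
    rw [← integral_mul_const]
  rw [← ex]
  exact h

lemma Ptf_sq_weight_integrable :
    Integrable (fun x => (∫ y, heatKernel t x y * f y) ^ 2 * Real.exp (-2 * lam * |x|)) := by
  refine (hII ht hfc hfi hlam).mono ?_ ?_
  · exact (((Ptf_continuous ht hfc hfi).pow 2).mul (by fun_prop)).aestronglyMeasurable
  · filter_upwards with x
    rw [Real.norm_eq_abs, Real.norm_eq_abs,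
      abs_of_nonneg (mul_nonneg (sq_nonneg _) (Real.exp_pos _).le)]
    have h1 : (∫ y, heatKernel t x y * f y) ^ 2 * Real.exp (-2 * lam * |x|)
        ≤ (∫ y, heatKernel t x y * f y ^ 2) * Real.exp (-2 * lam * |x|) :=
      mul_le_mul_of_nonneg_right (jensen_sq ht hfc hfi x) (Real.exp_pos _).le
    exact h1.trans (le_abs_self _)

lemma Ptf_sq_weight_le :
    ∫ x, (∫ y, heatKernel t x y * f y) ^ 2 * Real.exp (-2 * lam * |x|)
      ≤ 2 * Real.exp (2 * lam ^ 2 * t) * ∫ y, f y ^ 2 * Real.exp (-2 * lam * |y|) := by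
  have hF := prod_integrable ht hfc hfi hlam
  have step1 : ∫ x, (∫ y, heatKernel t x y * f y) ^ 2 * Real.exp (-2 * lam * |x|)
      ≤ ∫ x, (∫ y, heatKernel t x y * f y ^ 2) * Real.exp (-2 * lam * |x|) := by
    refine integral_mono (Ptf_sq_weight_integrable ht hfc hfi hlam)
      (hII ht hfc hfi hlam) ?_
    intro x
    exact mul_le_mul_of_nonneg_right (jensen_sq ht hfc hfi x) (Real.exp_pos _).le
  have step2 : ∫ x, (∫ y, heatKernel t x y * f y ^ 2) * Real.exp (-2 * lam * |x|)
      = ∫ y, ∫ x, heatKernel t x y * f y ^ 2 * Real.exp (-2 * lam * |x|) := by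
    have ex : (fun x => (∫ y, heatKernel t x y * f y ^ 2) * Real.exp (-2 * lam * |x|))
        = fun x => ∫ y, heatKernel t x y * f y ^ 2 * Real.exp (-2 * lam * |x|) := by
      funext x
      rw [← integral_mul_const]
    rw [ex]
    exact integral_integral_swap
      (f := fun x y => heatKernel t x y * f y ^ 2 * Real.exp (-2 * lam * |x|)) hF
  have step3 : ∫ y, (∫ x, heatKernel t x y * f y ^ 2 * Real.exp (-2 * lam * |x|))
      ≤ ∫ y, 2 * Real.exp (2 * lam ^ 2 * t) * (f y ^ 2 * Real.exp (-2 * lam * |y|)) := by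
    refine integral_mono hF.integral_prod_right ((hfi lam hlam).const_mul _) ?_
    intro y
    have ey : (fun x => heatKernel t x y * f y ^ 2 * Real.exp (-2 * lam * |x|))
        = fun x => (heatKernel t x y * Real.exp (-2 * lam * |x|)) * f y ^ 2 := by
      funext x; ring
    show (∫ x, heatKernel t x y * f y ^ 2 * Real.exp (-2 * lam * |x|)) ≤ _
    rw [ey, integral_mul_const]
    calc (∫ x, heatKernel t x y * Real.exp (-2 * lam * |x|)) * f y ^ 2
        ≤ (2 * Real.exp (2 * lam ^ 2 * t) * Real.exp (-2 * lam * |y|)) * f y ^ 2 :=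
          mul_le_mul_of_nonneg_right (weight_integral_le ht hlam.le y) (sq_nonneg _)
      _ = 2 * Real.exp (2 * lam ^ 2 * t) * (f y ^ 2 * Real.exp (-2 * lam * |y|)) := by ring
  calc ∫ x, (∫ y, heatKernel t x y * f y) ^ 2 * Real.exp (-2 * lam * |x|)
      ≤ ∫ x, (∫ y, heatKernel t x y * f y ^ 2) * Real.exp (-2 * lam * |x|) := step1
    _ = ∫ y, ∫ x, heatKernel t x y * f y ^ 2 * Real.exp (-2 * lam * |x|) := step2
    _ ≤ ∫ y, 2 * Real.exp (2 * lam ^ 2 * t) * (f y ^ 2 * Real.exp (-2 * lam * |y|)) := step3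
    _ = 2 * Real.exp (2 * lam ^ 2 * t) * ∫ y, f y ^ 2 * Real.exp (-2 * lam * |y|) :=
        integral_const_mul _ _
end WithF

theorem heatSemigroup_maps_L2tem (f : ℝ → ℝ) (hf : f ∈ L2tem) (t : ℝ) (ht : 0 < t) :
    (∀ x : ℝ, Integrable fun y => heatKernel t x y * f y) ∧
    Continuous (fun x => ∫ y : ℝ, heatKernel t x y * f y) ∧
    (fun x => ∫ y : ℝ, heatKernel t x y * f y) ∈ L2tem ∧
    ∀ lam > (0 : ℝ),
      wnorm lam (fun x => ∫ y : ℝ, heatKernel t x y * f y) ≤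
        Real.sqrt 2 * Real.exp (lam ^ 2 * t) * wnorm lam f := by
  obtain ⟨hfc, hfi⟩ := hf
  refine ⟨fun x => integrable_hk_mul_f ht hfc hfi x, Ptf_continuous ht hfc hfi,
    ⟨Ptf_continuous ht hfc hfi, fun lam hlam => Ptf_sq_weight_integrable ht hfc hfi hlam⟩,
    fun lam hlam => ?_⟩
  unfold wnorm
  have hb := Ptf_sq_weight_le ht hfc hfi hlam
  have hInn : (0:ℝ) ≤ ∫ y, f y ^ 2 * Real.exp (-2 * lam * |y|) :=
    integral_nonneg fun y => mul_nonneg (sq_nonneg _) (Real.exp_pos _).le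
  have h2 : 2 * Real.exp (2 * lam ^ 2 * t) * ∫ y, f y ^ 2 * Real.exp (-2 * lam * |y|)
      = (Real.sqrt 2 * Real.exp (lam ^ 2 * t)) ^ 2
        * ∫ y, f y ^ 2 * Real.exp (-2 * lam * |y|) := by
    rw [mul_pow, Real.sq_sqrt (by norm_num : (0:ℝ) ≤ 2),
      show Real.exp (lam ^ 2 * t) ^ 2 = Real.exp (2 * lam ^ 2 * t) by
        rw [sq, ← Real.exp_add]; ring_nf]
  calc Real.sqrt (∫ x, (∫ y, heatKernel t x y * f y) ^ 2 * Real.exp (-2 * lam * |x|))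
      ≤ Real.sqrt (2 * Real.exp (2 * lam ^ 2 * t)
          * ∫ y, f y ^ 2 * Real.exp (-2 * lam * |y|)) := Real.sqrt_le_sqrt hb
    _ = Real.sqrt 2 * Real.exp (lam ^ 2 * t)
        * Real.sqrt (∫ y, f y ^ 2 * Real.exp (-2 * lam * |y|)) := by
        rw [h2, Real.sqrt_mul (sq_nonneg _), Real.sqrt_sq (by positivity)]
end

section
/- Singular Gronwall inequality: let T > 0 and B, C ≥ 0. There exists a constant K, depending only on B, C and T, with the following property: for every A ≥ 0 and every bounded measurable function F : [0,T] → [0,∞) satisfying F(t) ≤ A + B ∫_0^t F(s) ds + C ∫_0^t (t-s)^{-1/2} F(s) ds for all t ∈ [0,T], one has F(t) ≤ K · A for all t ∈ [0,T]. -/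
open MeasureTheory Real Set

lemma kernel_eq {x : ℝ} (hx : 0 ≤ x) : (Real.sqrt x)⁻¹ = x ^ (-(1/2) : ℝ) := by
  rw [Real.sqrt_eq_rpow, ← Real.rpow_neg hx]

lemma kernel_integrable {r t : ℝ} (h : r ≤ t) :
    IntegrableOn (fun s => (Real.sqrt (t - s))⁻¹) (Set.Ioc r t) := by
  have h1 : IntervalIntegrable (fun x : ℝ => x ^ (-(1/2) : ℝ)) volume (t - t) (t - r) :=
    intervalIntegral.intervalIntegrable_rpow' (by norm_num)
  have h2 : IntervalIntegrable (fun s : ℝ => (t - s) ^ (-(1/2) : ℝ)) volume r t := by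
    simpa using (h1.comp_sub_left t).symm
  have h3 : IntegrableOn (fun s : ℝ => (t - s) ^ (-(1/2) : ℝ)) (Set.Ioc r t) := by
    rw [intervalIntegrable_iff_integrableOn_Ioc_of_le h] at h2; exact h2
  refine h3.congr_fun (fun s hs => ?_) measurableSet_Ioc
  exact (kernel_eq (by linarith [hs.2] : (0:ℝ) ≤ t - s)).symm

lemma kernel_integral {r t : ℝ} (h : r ≤ t) :
    ∫ s in Set.Ioc r t, (Real.sqrt (t - s))⁻¹ = 2 * Real.sqrt (t - r) := by
  have e1 : ∫ s in Set.Ioc r t, (Real.sqrt (t - s))⁻¹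
      = ∫ s in Set.Ioc r t, (t - s) ^ (-(1/2) : ℝ) := by
    refine setIntegral_congr_fun measurableSet_Ioc (fun s hs => ?_)
    exact kernel_eq (by linarith [hs.2] : (0:ℝ) ≤ t - s)
  rw [e1, ← intervalIntegral.integral_of_le h,
    intervalIntegral.integral_comp_sub_left (fun x : ℝ => x ^ (-(1/2) : ℝ)) t,
    sub_self]
  rw [integral_rpow (Or.inl (by norm_num)), Real.sqrt_eq_rpow]
  norm_num
  ring

lemma step_bound (T B C δ : ℝ) (hT : 0 < T) (hB : 0 ≤ B) (hC : 0 ≤ C) (hδ : 0 < δ)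
    (F : ℝ → ℝ) (hF : Measurable F) (hFnn : ∀ s ∈ Set.Icc (0:ℝ) T, 0 ≤ F s)
    (M : ℝ) (hM : ∀ s ∈ Set.Icc (0:ℝ) T, F s ≤ M)
    (A Kp b : ℝ) (hA : 0 ≤ A) (hKp : 0 ≤ Kp) (hb : 0 ≤ b)
    (n : ℕ)
    (IH : ∀ s ∈ Set.Icc (0:ℝ) T, s ≤ n*δ → F s ≤ Kp * A)
    (hbd : ∀ s ∈ Set.Icc (0:ℝ) T, s ≤ (n+1)*δ → F s ≤ b)
    (t : ℝ) (ht : t ∈ Set.Icc (0:ℝ) T) (htn : t ≤ (n+1)*δ)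
    (hineq : F t ≤ A + B * (∫ s in Set.Ioc (0:ℝ) t, F s) +
      C * ∫ s in Set.Ioc (0:ℝ) t, (Real.sqrt (t-s))⁻¹ * F s) :
    F t ≤ (1 + B*T*Kp + C*(Real.sqrt δ)⁻¹*T*Kp) * A + (B*δ + C*(2*Real.sqrt δ)) * b := by
  obtain ⟨ht0, htT⟩ := ht
  set r : ℝ := max (t - δ) 0 with hr
  have hr0 : 0 ≤ r := le_max_right _ _
  have hrt : r ≤ t := max_le (by linarith) ht0
  have hrn : r ≤ n*δ := by
    have : (t - δ) ≤ n*δ := by push_cast at htn ⊢; linarith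
    exact max_le this (by positivity)
  have htrδ : t - r ≤ δ := by
    rcases le_total (t - δ) 0 with h | h
    · simp [hr, max_eq_right h]; linarith
    · rw [hr, max_eq_left h]; linarith
  -- memberships
  have hmem : ∀ s ∈ Set.Ioc (0:ℝ) t, s ∈ Set.Icc (0:ℝ) T :=
    fun s hs => ⟨hs.1.le, le_trans hs.2 htT⟩
  -- integrability of F on Ioc 0 t
  have hFae : AEStronglyMeasurable F volume := hF.aestronglyMeasurable
  have hMnn : 0 ≤ M := le_trans (hFnn 0 ⟨le_refl _, hT.le⟩) (hM 0 ⟨le_refl _, hT.le⟩)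
  have I1 : IntegrableOn F (Set.Ioc (0:ℝ) t) := by
    refine Measure.integrableOn_of_bounded (M := M) (by simp) hFae ?_
    filter_upwards [ae_restrict_mem measurableSet_Ioc] with s hs
    rw [Real.norm_eq_abs, abs_of_nonneg (hFnn s (hmem s hs))]
    exact hM s (hmem s hs)
  -- measurability of kernel * F
  have hkermeas : Measurable (fun s => (Real.sqrt (t - s))⁻¹) :=
    ((Real.continuous_sqrt.measurable).comp (measurable_const.sub measurable_id)).inv
  have I2 : IntegrableOn (fun s => (Real.sqrt (t-s))⁻¹ * F s) (Set.Ioc (0:ℝ) t) := by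
    have hker := kernel_integrable (le_trans hr0 hrt : (0:ℝ) ≤ t)
    refine Integrable.mono (hker.const_mul M) ((hkermeas.mul hF).aestronglyMeasurable) ?_
    filter_upwards [ae_restrict_mem measurableSet_Ioc] with s hs
    have h1 : 0 ≤ (Real.sqrt (t - s))⁻¹ := by positivity
    rw [Real.norm_eq_abs, Real.norm_eq_abs,
      abs_of_nonneg (mul_nonneg h1 (hFnn s (hmem s hs))),
      abs_of_nonneg (mul_nonneg hMnn h1)]
    rw [mul_comm M _]
    exact mul_le_mul_of_nonneg_left (hM s (hmem s hs)) h1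
  -- split sets
  have hsplit : Set.Ioc (0:ℝ) r ∪ Set.Ioc r t = Set.Ioc (0:ℝ) t :=
    Set.Ioc_union_Ioc_eq_Ioc hr0 hrt
  have hsub1 : Set.Ioc (0:ℝ) r ⊆ Set.Ioc (0:ℝ) t := Set.Ioc_subset_Ioc_right hrt
  have hsub2 : Set.Ioc r t ⊆ Set.Ioc (0:ℝ) t := Set.Ioc_subset_Ioc_left hr0
  have hdisj : Disjoint (Set.Ioc (0:ℝ) r) (Set.Ioc r t) := Set.Ioc_disjoint_Ioc_of_le le_rfl
  have e1 : (∫ s in Set.Ioc (0:ℝ) t, F s)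
      = (∫ s in Set.Ioc (0:ℝ) r, F s) + (∫ s in Set.Ioc r t, F s) := by
    rw [← hsplit]
    exact setIntegral_union hdisj measurableSet_Ioc (I1.mono_set hsub1) (I1.mono_set hsub2)
  have e2 : (∫ s in Set.Ioc (0:ℝ) t, (Real.sqrt (t-s))⁻¹ * F s)
      = (∫ s in Set.Ioc (0:ℝ) r, (Real.sqrt (t-s))⁻¹ * F s)
        + (∫ s in Set.Ioc r t, (Real.sqrt (t-s))⁻¹ * F s) := by
    rw [← hsplit]
    exact setIntegral_union hdisj measurableSet_Ioc (I2.mono_set hsub1) (I2.mono_set hsub2)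
  -- piece bounds
  have vol1 : (volume (Set.Ioc (0:ℝ) r)).toReal = r := by
    rw [Real.volume_Ioc, ENNReal.toReal_ofReal (by linarith)]; ring
  have vol2 : (volume (Set.Ioc r t)).toReal = t - r := by
    rw [Real.volume_Ioc, ENNReal.toReal_ofReal (by linarith)]
  have P1 : (∫ s in Set.Ioc (0:ℝ) r, F s) ≤ Kp * A * T := by
    have : (∫ s in Set.Ioc (0:ℝ) r, F s) ≤ ∫ _ in Set.Ioc (0:ℝ) r, Kp * A := by
      refine setIntegral_mono_on (I1.mono_set hsub1)
        ((integrableOn_const_iff).mpr (Or.inr measure_Ioc_lt_top)) measurableSet_Ioc ?_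
      intro s hs
      exact IH s (hmem s (hsub1 hs)) (le_trans hs.2 hrn)
    rw [setIntegral_const, measureReal_def, vol1, smul_eq_mul] at this
    calc (∫ s in Set.Ioc (0:ℝ) r, F s) ≤ r * (Kp * A) := this
    _ ≤ T * (Kp * A) := by
        apply mul_le_mul_of_nonneg_right (le_trans (le_trans (max_le (by linarith) ht0) htT) le_rfl)
        positivity
    _ = Kp * A * T := by ring
  have P2 : (∫ s in Set.Ioc r t, F s) ≤ b * δ := by
    have : (∫ s in Set.Ioc r t, F s) ≤ ∫ _ in Set.Ioc r t, b := by
      refine setIntegral_mono_on (I1.mono_set hsub2)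
        ((integrableOn_const_iff).mpr (Or.inr measure_Ioc_lt_top)) measurableSet_Ioc ?_
      intro s hs
      exact hbd s (hmem s (hsub2 hs)) (le_trans hs.2 htn)
    rw [setIntegral_const, measureReal_def, vol2, smul_eq_mul] at this
    calc (∫ s in Set.Ioc r t, F s) ≤ (t - r) * b := this
    _ ≤ δ * b := mul_le_mul_of_nonneg_right htrδ hb
    _ = b * δ := by ring
  have P3 : (∫ s in Set.Ioc (0:ℝ) r, (Real.sqrt (t-s))⁻¹ * F s)
      ≤ (Real.sqrt δ)⁻¹ * (Kp * A) * T := by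
    have hpt : ∀ s ∈ Set.Ioc (0:ℝ) r, (Real.sqrt (t-s))⁻¹ * F s
        ≤ (Real.sqrt δ)⁻¹ * (Kp * A) := by
      intro s hs
      have hrpos : 0 < r := lt_of_lt_of_le hs.1 hs.2
      have hreq : r = t - δ := by
        rcases le_or_gt (t - δ) 0 with h | h
        · exfalso; rw [hr, max_eq_right h] at hrpos; exact lt_irrefl 0 hrpos
        · rw [hr, max_eq_left h.le]
      have hts : δ ≤ t - s := by
        have : s ≤ t - δ := hreq ▸ hs.2
        linarith
      have hker : (Real.sqrt (t-s))⁻¹ ≤ (Real.sqrt δ)⁻¹ := by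
        apply inv_anti₀ (Real.sqrt_pos.mpr hδ)
        exact Real.sqrt_le_sqrt hts
      have hFs := IH s (hmem s (hsub1 hs)) (le_trans hs.2 hrn)
      exact mul_le_mul hker hFs (hFnn s (hmem s (hsub1 hs))) (by positivity)
    have : (∫ s in Set.Ioc (0:ℝ) r, (Real.sqrt (t-s))⁻¹ * F s)
        ≤ ∫ _ in Set.Ioc (0:ℝ) r, (Real.sqrt δ)⁻¹ * (Kp * A) :=
      setIntegral_mono_on (I2.mono_set hsub1)
        ((integrableOn_const_iff).mpr (Or.inr measure_Ioc_lt_top)) measurableSet_Ioc hpt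
    rw [setIntegral_const, measureReal_def, vol1, smul_eq_mul] at this
    calc (∫ s in Set.Ioc (0:ℝ) r, (Real.sqrt (t-s))⁻¹ * F s)
        ≤ r * ((Real.sqrt δ)⁻¹ * (Kp * A)) := this
    _ ≤ T * ((Real.sqrt δ)⁻¹ * (Kp * A)) := by
        apply mul_le_mul_of_nonneg_right (le_trans hrt htT)
        positivity
    _ = (Real.sqrt δ)⁻¹ * (Kp * A) * T := by ring
  have P4 : (∫ s in Set.Ioc r t, (Real.sqrt (t-s))⁻¹ * F s)
      ≤ 2 * Real.sqrt δ * b := by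
    have : (∫ s in Set.Ioc r t, (Real.sqrt (t-s))⁻¹ * F s)
        ≤ ∫ s in Set.Ioc r t, (Real.sqrt (t-s))⁻¹ * b := by
      refine setIntegral_mono_on (I2.mono_set hsub2)
        ((kernel_integrable hrt).mul_const b) measurableSet_Ioc ?_
      intro s hs
      refine mul_le_mul_of_nonneg_left ?_ (by positivity)
      exact hbd s (hmem s (hsub2 hs)) (le_trans hs.2 htn)
    rw [integral_mul_const, kernel_integral hrt] at this
    calc (∫ s in Set.Ioc r t, (Real.sqrt (t-s))⁻¹ * F s)
        ≤ 2 * Real.sqrt (t - r) * b := this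
    _ ≤ 2 * Real.sqrt δ * b := by
        apply mul_le_mul_of_nonneg_right _ hb
        have := Real.sqrt_le_sqrt htrδ
        linarith
  calc F t ≤ A + B * (∫ s in Set.Ioc (0:ℝ) t, F s) +
      C * ∫ s in Set.Ioc (0:ℝ) t, (Real.sqrt (t-s))⁻¹ * F s := hineq
  _ ≤ A + B * (Kp * A * T + b * δ) +
      C * ((Real.sqrt δ)⁻¹ * (Kp * A) * T + 2 * Real.sqrt δ * b) := by
      rw [e1, e2]
      gcongr
  _ = (1 + B*T*Kp + C*(Real.sqrt δ)⁻¹*T*Kp) * A + (B*δ + C*(2*Real.sqrt δ)) * b := by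
      ring

noncomputable def Kseq (B C T δ : ℝ) : ℕ → ℝ
  | 0 => 1
  | (n+1) => 2 * (1 + B*T*(Kseq B C T δ n) + C*(Real.sqrt δ)⁻¹*T*(Kseq B C T δ n))

lemma Kseq_nonneg (B C T δ : ℝ) (hB : 0 ≤ B) (hC : 0 ≤ C) (hT : 0 ≤ T) :
    ∀ n, 0 ≤ Kseq B C T δ n := by
  intro n
  induction n with
  | zero => norm_num [Kseq]
  | succ n ih =>
    have h1 : (0:ℝ) ≤ (Real.sqrt δ)⁻¹ := by positivity
    simp only [Kseq]
    positivity

/-- Singular Gronwall inequality with kernel `(t-s)^{-1/2}`. -/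
theorem singular_gronwall (T B C : ℝ) (hT : 0 < T) (hB : 0 ≤ B) (hC : 0 ≤ C) :
    ∃ K : ℝ, ∀ A : ℝ, 0 ≤ A → ∀ F : ℝ → ℝ, Measurable F →
      (∀ t ∈ Set.Icc (0 : ℝ) T, 0 ≤ F t) →
      (∃ M : ℝ, ∀ t ∈ Set.Icc (0 : ℝ) T, F t ≤ M) →
      (∀ t ∈ Set.Icc (0 : ℝ) T,
        F t ≤ A + B * (∫ s in Set.Ioc (0 : ℝ) t, F s) +
          C * ∫ s in Set.Ioc (0 : ℝ) t, (Real.sqrt (t - s))⁻¹ * F s) →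
      ∀ t ∈ Set.Icc (0 : ℝ) T, F t ≤ K * A := by
  -- set up δ
  set e : ℝ := (2*(B+2*C)+2)⁻¹ with he_def
  have hepos : 0 < e := by positivity
  have he1 : e ≤ 1 := by
    rw [he_def]
    rw [inv_le_one_iff₀]; right; linarith
  set δ : ℝ := e^2 with hδ_def
  have hδpos : 0 < δ := by positivity
  have hsqrtδ : Real.sqrt δ = e := by
    rw [hδ_def, Real.sqrt_sq hepos.le]
  have hecancel : e * (2*(B+2*C)+2) = 1 := inv_mul_cancel₀ (by positivity)
  have hhalf : B*δ + C*(2*Real.sqrt δ) ≤ 1/2 := by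
    rw [hsqrtδ, hδ_def]
    nlinarith [sq_nonneg e, mul_nonneg hB hepos.le, mul_nonneg hC hepos.le]
  set N : ℕ := ⌈T/δ⌉₊ with hN
  have hTN : T ≤ N * δ := by
    rw [← div_le_iff₀ hδpos]
    exact Nat.le_ceil _
  refine ⟨Kseq B C T δ N, ?_⟩
  intro A hA F hF hFnn hMex hineq
  obtain ⟨M, hM⟩ := hMex
  have hMnn : 0 ≤ M := le_trans (hFnn 0 ⟨le_refl _, hT.le⟩) (hM 0 ⟨le_refl _, hT.le⟩)
  have key : ∀ n : ℕ, ∀ t ∈ Set.Icc (0:ℝ) T, t ≤ n*δ → F t ≤ Kseq B C T δ n * A := by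
    intro n
    induction n with
    | zero =>
      intro t ht htn
      have ht0 : t = 0 := le_antisymm (by simpa using htn) ht.1
      subst ht0
      have := hineq 0 ⟨le_refl _, hT.le⟩
      simpa [Kseq] using this
    | succ n IH =>
      intro t ht htn
      set Kp := Kseq B C T δ n with hKp_def
      have hKp : 0 ≤ Kp := Kseq_nonneg B C T δ hB hC hT.le n
      set c : ℝ := 1 + B*T*Kp + C*(Real.sqrt δ)⁻¹*T*Kp with hc_def
      have hc : 0 ≤ c := by
        have : (0:ℝ) ≤ (Real.sqrt δ)⁻¹ := by positivity
        rw [hc_def]; positivity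
      have inner : ∀ m : ℕ, ∀ u ∈ Set.Icc (0:ℝ) T, u ≤ (n+1)*δ →
          F u ≤ 2*c*A + (1/2)^m * M := by
        intro m
        induction m with
        | zero =>
          intro u hu _
          have := hM u hu
          norm_num
          nlinarith [mul_nonneg hc hA]
        | succ m IHm =>
          intro u hu hun
          set b : ℝ := 2*c*A + (1/2)^m * M with hb_def
          have hbnn : 0 ≤ b := by
            rw [hb_def]; positivity
          have hsb := step_bound T B C δ hT hB hC hδpos F hF hFnn M hM A Kp b hA hKp hbnn
            n IH IHm u hu hun (hineq u hu)
          have hbound : (B*δ + C*(2*Real.sqrt δ)) * b ≤ (1/2) * b :=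
            mul_le_mul_of_nonneg_right hhalf hbnn
          have : F u ≤ c * A + (1/2) * b := by
            rw [hc_def]; linarith
          rw [hb_def] at this
          calc F u ≤ c * A + (1/2) * (2*c*A + (1/2)^m * M) := this
          _ = 2*c*A + (1/2)^(m+1) * M := by ring
      -- take the limit in m
      have hlim : Filter.Tendsto (fun m : ℕ => 2*c*A + (1/2:ℝ)^m * M)
          Filter.atTop (nhds (2*c*A + 0 * M)) := by
        refine Filter.Tendsto.const_add _ (Filter.Tendsto.mul_const M ?_)
        exact tendsto_pow_atTop_nhds_zero_of_lt_one (by norm_num) (by norm_num)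
      have htn' : t ≤ (n+1:ℝ)*δ := by push_cast at htn; linarith
      have hle : F t ≤ 2*c*A + 0 * M :=
        ge_of_tendsto' hlim (fun m => inner m t ht htn')
      have : Kseq B C T δ (n+1) = 2*c := by
        simp only [Kseq, hc_def, hKp_def]
      rw [this]
      linarith
  intro t ht
  exact key N t ht (le_trans ht.2 hTN)
end

section
/- Tail-to-moment lemma: let (Ω, ℱ, P) be a probability space, let X, Y : Ω → [0,∞) be measurable, let q > 0 and c ≥ 0, and suppose that for every η > 0, P(X > η) ≤ P(Y > η^q) + c η^{-q} E[min(η^q, Y)]. Then for every 0 < p < q, E[X^p] ≤ (1 + c q/(q-p)) · E[Y^{p/q}]. -/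
open MeasureTheory Real
open Set
open scoped ENNReal NNReal

lemma inner_int {p q : ℝ} (hp : 0 < p) (hq : 0 < q) (hpq : p < q) {y : ℝ} (hy : 0 ≤ y) :
    ∫⁻ t in Set.Ioi (0:ℝ), ENNReal.ofReal (t ^ (p - 1 - q) * min (t ^ q) y) =
      ENNReal.ofReal (y ^ (p / q) * (1 / p + 1 / (q - p))) := by
  rcases eq_or_lt_of_le hy with h0 | hy0
  · have : ∀ t ∈ Set.Ioi (0:ℝ), ENNReal.ofReal (t ^ (p - 1 - q) * min (t ^ q) y) = 0 := by
      intro t ht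
      rw [← h0, min_eq_right (Real.rpow_nonneg (le_of_lt ht) q)]
      simp
    rw [setLIntegral_congr_fun measurableSet_Ioi this]
    simp [← h0, Real.zero_rpow (by positivity : p / q ≠ 0)]
  · set a := y ^ (1/q) with ha_def
    have ha : 0 < a := Real.rpow_pos_of_pos hy0 _
    have haq : a ^ q = y := by
      rw [ha_def, ← Real.rpow_mul hy, one_div, inv_mul_cancel₀ hq.ne', Real.rpow_one]
    have hap : a ^ p = y ^ (p / q) := by
      rw [ha_def, ← Real.rpow_mul hy, one_div, inv_mul_eq_div]
    have hsplit : Set.Ioi (0:ℝ) = Set.Ioc 0 a ∪ Set.Ioi a := (Set.Ioc_union_Ioi_eq_Ioi ha.le).symm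
    rw [hsplit, lintegral_union measurableSet_Ioi (Set.Ioc_disjoint_Ioi le_rfl)]
    have h1 : ∫⁻ t in Set.Ioc 0 a, ENNReal.ofReal (t ^ (p - 1 - q) * min (t ^ q) y)
        = ENNReal.ofReal (a ^ p / p) := by
      have hcg : ∀ t ∈ Set.Ioc (0:ℝ) a, ENNReal.ofReal (t ^ (p - 1 - q) * min (t ^ q) y)
          = ENNReal.ofReal (t ^ (p - 1)) := by
        intro t ht
        have hmin : min (t ^ q) y = t ^ q := by
          refine min_eq_left ?_
          rw [← haq]; exact Real.rpow_le_rpow ht.1.le ht.2 hq.le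
        rw [hmin, ← Real.rpow_add ht.1]
        ring_nf
      rw [setLIntegral_congr_fun measurableSet_Ioc hcg]
      rw [← ofReal_integral_eq_lintegral_ofReal]
      · congr 1
        rw [← intervalIntegral.integral_of_le ha.le, integral_rpow (Or.inl (by linarith))]
        rw [Real.zero_rpow (by linarith : p - 1 + 1 ≠ 0)]
        norm_num
      · have := intervalIntegral.intervalIntegrable_rpow' (a := 0) (b := a)
          (r := p - 1) (by linarith)
        rwa [intervalIntegrable_iff, Set.uIoc_of_le ha.le] at this
      · filter_upwards [self_mem_ae_restrict measurableSet_Ioc] with t ht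
        exact Real.rpow_nonneg ht.1.le _
    have h2 : ∫⁻ t in Set.Ioi a, ENNReal.ofReal (t ^ (p - 1 - q) * min (t ^ q) y)
        = ENNReal.ofReal (a ^ p / (q - p)) := by
      have hcg : ∀ t ∈ Set.Ioi a, ENNReal.ofReal (t ^ (p - 1 - q) * min (t ^ q) y)
          = ENNReal.ofReal (y * t ^ (p - 1 - q)) := by
        intro t ht
        have hmin : min (t ^ q) y = y := by
          refine min_eq_right ?_
          rw [← haq]; exact (Real.rpow_lt_rpow ha.le ht hq).le
        rw [hmin, mul_comm]
      rw [setLIntegral_congr_fun measurableSet_Ioi hcg]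
      rw [← ofReal_integral_eq_lintegral_ofReal]
      · rw [MeasureTheory.integral_const_mul, integral_Ioi_rpow_of_lt (by linarith) ha]
        congr 1
        have he : p - 1 - q + 1 = p - q := by ring
        rw [he, ← haq]
        have hqp' : a ^ q * a ^ (p - q) = a ^ p := by
          rw [← Real.rpow_add ha]; congr 1; ring
        have hd : -1 / (p - q) = 1 / (q - p) := by
          rw [← neg_sub p q, div_neg, neg_div]
        calc a ^ q * (-a ^ (p - q) / (p - q))
            = (a ^ q * a ^ (p - q)) * (-1 / (p - q)) := by ring
          _ = a ^ p * (1 / (q - p)) := by rw [hqp', hd]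
          _ = a ^ p / (q - p) := by rw [mul_one_div]
      · exact (integrableOn_Ioi_rpow_of_lt (by linarith) ha).const_mul y
      · filter_upwards [self_mem_ae_restrict measurableSet_Ioi] with t ht
        exact mul_nonneg hy (Real.rpow_nonneg (ha.trans ht).le _)
    rw [h1, h2, ← ENNReal.ofReal_add (div_nonneg (Real.rpow_nonneg ha.le _) hp.le) (div_nonneg (Real.rpow_nonneg ha.le _) (by linarith))]
    congr 1
    rw [← hap]
    field_simp

/-- Tail-to-moment lemma: a tail bound of the form
`P(X > η) ≤ P(Y > η^q) + c η^{-q} E[min(η^q, Y)]` for all `η > 0` implies the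
moment bound `E[X^p] ≤ (1 + c q/(q-p)) E[Y^{p/q}]` for all `0 < p < q`. -/
theorem tail_to_moment {Ω : Type*} [MeasurableSpace Ω] (P : Measure Ω)
    [IsProbabilityMeasure P] (X Y : Ω → ℝ) (hX : Measurable X) (hY : Measurable Y)
    (hX0 : ∀ ω, 0 ≤ X ω) (hY0 : ∀ ω, 0 ≤ Y ω)
    (q c : ℝ) (hq : 0 < q) (hc : 0 ≤ c)
    (htail : ∀ η : ℝ, 0 < η →
      P {ω | η < X ω} ≤ P {ω | η ^ q < Y ω} +
        ENNReal.ofReal (c * η ^ (-q)) * ∫⁻ ω, ENNReal.ofReal (min (η ^ q) (Y ω)) ∂P)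
    (p : ℝ) (hp : 0 < p) (hpq : p < q) :
    (∫⁻ ω, ENNReal.ofReal (X ω ^ p) ∂P) ≤
      ENNReal.ofReal (1 + c * q / (q - p)) * ∫⁻ ω, ENNReal.ofReal (Y ω ^ (p / q)) ∂P := by
  have hqp : (0:ℝ) < q - p := by linarith
  set I := ∫⁻ ω, ENNReal.ofReal (Y ω ^ (p / q)) ∂P with hI
  set L : ℝ → ℝ≥0∞ := fun t => ∫⁻ ω, ENNReal.ofReal (min (t ^ q) (Y ω)) ∂P with hL
  set A : ℝ → ℝ≥0∞ := fun t => P {a | t ^ q < Y a} * ENNReal.ofReal (t ^ (p - 1)) with hA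
  set B : ℝ → ℝ≥0∞ :=
    fun t => ∫⁻ ω, ENNReal.ofReal (c * (t ^ (p - 1 - q) * min (t ^ q) (Y ω))) ∂P with hB
  -- layer cake for Y^{p/q}
  have hYlc : I = ENNReal.ofReal p * ∫⁻ t in Set.Ioi (0:ℝ), A t := by
    have hf : ∀ ω, (Y ω ^ q⁻¹) ^ p = Y ω ^ (p / q) := fun ω => by
      rw [← Real.rpow_mul (hY0 ω), inv_mul_eq_div]
    have h1 := lintegral_rpow_eq_lintegral_meas_lt_mul P
      (f := fun ω => Y ω ^ q⁻¹)
      (Filter.Eventually.of_forall fun ω => Real.rpow_nonneg (hY0 ω) _)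
      (hY.pow measurable_const).aemeasurable hp
    simp_rw [hf] at h1
    rw [hI, h1]
    congr 1
    refine setLIntegral_congr_fun measurableSet_Ioi ?_
    intro t ht
    have hset : {a | t < Y a ^ q⁻¹} = {a | t ^ q < Y a} := by
      ext a
      simp only [Set.mem_setOf_eq]
      exact Real.lt_rpow_inv_iff_of_pos (le_of_lt ht) (hY0 a) hq
    beta_reduce
    rw [hset]
  -- rewriting the error term integrand
  have hEt : ∀ t : ℝ, 0 < t →
      ENNReal.ofReal (c * t ^ (-q)) * L t * ENNReal.ofReal (t ^ (p - 1)) = B t := by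
    intro t ht
    have hnn : 0 ≤ c * t ^ (p - 1 - q) :=
      mul_nonneg hc (Real.rpow_nonneg ht.le _)
    have hpow : c * t ^ (-q) * t ^ (p - 1) = c * t ^ (p - 1 - q) := by
      rw [mul_assoc, ← Real.rpow_add ht]
      congr 2
      ring
    calc ENNReal.ofReal (c * t ^ (-q)) * L t * ENNReal.ofReal (t ^ (p - 1))
        = ENNReal.ofReal (c * t ^ (-q)) * ENNReal.ofReal (t ^ (p - 1)) * L t := by ring
      _ = ENNReal.ofReal (c * t ^ (-q) * t ^ (p - 1)) * L t := by
          rw [← ENNReal.ofReal_mul (mul_nonneg hc (Real.rpow_nonneg ht.le _))]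
      _ = ENNReal.ofReal (c * t ^ (p - 1 - q)) * L t := by rw [hpow]
      _ = ∫⁻ ω, ENNReal.ofReal (c * t ^ (p - 1 - q)) *
            ENNReal.ofReal (min (t ^ q) (Y ω)) ∂P :=
          (lintegral_const_mul' _ _ ENNReal.ofReal_ne_top).symm
      _ = B t := by
          rw [hB]
          congr 1
          funext ω
          rw [← ENNReal.ofReal_mul hnn, mul_assoc]
  -- measurability of A
  have hAmeas : Measurable A := by
    apply Measurable.mul
    · have h1 : Measurable fun s : ℝ => P {a | s < Y a} :=
        Antitone.measurable fun s t hst => measure_mono fun a ha => lt_of_le_of_lt hst ha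
      exact h1.comp (measurable_id.pow measurable_const)
    · exact (measurable_id.pow (measurable_const : Measurable fun _ : ℝ => p - 1)).ennreal_ofReal
  -- pointwise tail bound
  have hbound : ∫⁻ t in Set.Ioi (0:ℝ), P {a | t < X a} * ENNReal.ofReal (t ^ (p - 1)) ≤
      ∫⁻ t in Set.Ioi (0:ℝ), (A t + B t) := by
    refine lintegral_mono_ae ?_
    filter_upwards [self_mem_ae_restrict measurableSet_Ioi] with t ht
    have ht' : (0:ℝ) < t := ht
    calc P {a | t < X a} * ENNReal.ofReal (t ^ (p - 1))
        ≤ (P {a | t ^ q < Y a} + ENNReal.ofReal (c * t ^ (-q)) * L t) *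
            ENNReal.ofReal (t ^ (p - 1)) := mul_le_mul_left (htail t ht') _
      _ = A t + ENNReal.ofReal (c * t ^ (-q)) * L t * ENNReal.ofReal (t ^ (p - 1)) := by
          rw [add_mul]
      _ = A t + B t := by rw [hEt t ht']
  -- swap and evaluate the error term
  have hT2 : ∫⁻ t in Set.Ioi (0:ℝ), B t =
      ENNReal.ofReal (c * (1 / p + 1 / (q - p))) * I := by
    have hF : Measurable fun z : ℝ × Ω =>
        ENNReal.ofReal (c * (z.1 ^ (p - 1 - q) * min (z.1 ^ q) (Y z.2))) := by
      apply Measurable.ennreal_ofReal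
      exact (((measurable_fst.pow measurable_const).mul
        ((measurable_fst.pow measurable_const).min (hY.comp measurable_snd))).const_mul c)
    have hswap := lintegral_lintegral_swap (μ := volume.restrict (Set.Ioi (0:ℝ))) (ν := P)
      (f := fun t ω => ENNReal.ofReal (c * (t ^ (p - 1 - q) * min (t ^ q) (Y ω))))
      hF.aemeasurable
    rw [hB]
    rw [hswap]
    have hinner : ∀ ω, ∫⁻ t in Set.Ioi (0:ℝ),
        ENNReal.ofReal (c * (t ^ (p - 1 - q) * min (t ^ q) (Y ω))) =
        ENNReal.ofReal (c * (1 / p + 1 / (q - p))) * ENNReal.ofReal (Y ω ^ (p / q)) := by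
      intro ω
      have : ∀ t : ℝ, ENNReal.ofReal (c * (t ^ (p - 1 - q) * min (t ^ q) (Y ω))) =
          ENNReal.ofReal c * ENNReal.ofReal (t ^ (p - 1 - q) * min (t ^ q) (Y ω)) := fun t =>
        ENNReal.ofReal_mul hc
      simp_rw [this]
      rw [lintegral_const_mul' _ _ ENNReal.ofReal_ne_top,
        inner_int hp hq hpq (hY0 ω), ← ENNReal.ofReal_mul hc, ← ENNReal.ofReal_mul
          (mul_nonneg hc (by positivity))]
      congr 1
      ring
    simp_rw [hinner]
    rw [lintegral_const_mul' _ _ ENNReal.ofReal_ne_top]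
  -- put everything together
  rw [lintegral_rpow_eq_lintegral_meas_lt_mul P
      (Filter.Eventually.of_forall hX0) hX.aemeasurable hp]
  calc ENNReal.ofReal p * ∫⁻ t in Set.Ioi (0:ℝ), P {a | t < X a} * ENNReal.ofReal (t ^ (p - 1))
      ≤ ENNReal.ofReal p * ∫⁻ t in Set.Ioi (0:ℝ), (A t + B t) := mul_le_mul_right hbound _
    _ = ENNReal.ofReal p * ((∫⁻ t in Set.Ioi (0:ℝ), A t) + ∫⁻ t in Set.Ioi (0:ℝ), B t) := by
        rw [lintegral_add_left hAmeas]
    _ = ENNReal.ofReal p * (∫⁻ t in Set.Ioi (0:ℝ), A t) +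
        ENNReal.ofReal p * ∫⁻ t in Set.Ioi (0:ℝ), B t := by rw [mul_add]
    _ = I + ENNReal.ofReal p * (ENNReal.ofReal (c * (1 / p + 1 / (q - p))) * I) := by
        rw [← hYlc, hT2]
    _ = I + ENNReal.ofReal (c * q / (q - p)) * I := by
        rw [← mul_assoc, ← ENNReal.ofReal_mul hp.le]
        congr 2
        field_simp
        ring
    _ = ENNReal.ofReal (1 + c * q / (q - p)) * I := by
        rw [ENNReal.ofReal_add zero_le_one (div_nonneg (mul_nonneg hc hq.le) hqp.le),
          add_mul, ENNReal.ofReal_one, one_mul]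
end
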